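/- arXiv:2304.00419 — 3 statements merged into one kernel-verified Lean document; each statement's English description precedes it below -/
import Mathlib

section
/- Let X = (x_1,...,x_n) ⊆ [0,1]^d, let F be a finite set of k-tuples of centers in [0,1]^d with |F| ≤ 2^{qkd} for an integer constant q, and consider the process: C_1 ∈ F arbitrary; independent batches B_1, B_2, ..., each consisting of b independent uniform samples from the entries of X; C_{i+1} = U(C_i, B_i) for an arbitrary function U : F × ([0,1]^d)^b → F; the process stops at the first index T with f_{B_T}(C_T) − f_{B_T}(C_{T+1}) < ε. There exist absolute constants c_1, c_2 > 0 such that if b ≥ c_1·(d/ε)²·(qkd + log(n·d/ε)), then Pr[T ≤ 2d/ε + 1] ≥ 1 − c_2/n. -/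
open scoped BigOperators
open MeasureTheory

/-- `kmCost C x = min_{C ∈ 𝒞} ‖x − C‖²`. -/
noncomputable def kmCost {d k : ℕ} (C : Fin k → EuclideanSpace ℝ (Fin d))
    (x : EuclideanSpace ℝ (Fin d)) : ℝ :=
  ⨅ j, ‖x - C j‖ ^ 2

/-- `kmCostTuple C A = (1/ℓ) Σ_{i} f_{a_i}(𝒞)`. -/
noncomputable def kmCostTuple {d k m : ℕ} (C : Fin k → EuclideanSpace ℝ (Fin d))
    (A : Fin m → EuclideanSpace ℝ (Fin d)) : ℝ :=
  ((m : ℝ))⁻¹ * ∑ i : Fin m, kmCost C (A i)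

/-!
With `N = ⌊2d/ε⌋ + 1` steps, call a run *accurate* if for every step `i ≤ N` and every
configuration `C ∈ F` the batch cost `f_{B_i}(C)` is within `ε/4` of the true cost `f_X(C)`.
On an accurate run, a step with batch progress at least `ε` decreases the true cost by at least
`ε/2`; since the true cost of the iterates lies in `[0, d]`, this cannot happen `N > 2d/ε` times
in a row. Each of the `N·|F|` comparisons fails with probability at most `2 exp(-bε²/(8d²))` by
Hoeffding's inequality, and the lower bound on `b` makes the union bound at most `6/n`.
-/

open ProbabilityTheory Real

section

variable {Ω : Type*} [MeasurableSpace Ω] {μ : Measure Ω} [IsProbabilityMeasure μ]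

theorem measureReal_abs_sum_sub_integral_ge_le {ι : Type*} {X : ι → Ω → ℝ}
    (h_indep : iIndepFun X μ) (hX : ∀ i, AEMeasurable (X i) μ) {a b : ℝ}
    (hab : ∀ i, ∀ᵐ ω ∂μ, X i ω ∈ Set.Icc a b) (s : Finset ι) {t : ℝ} (ht : 0 ≤ t) :
    μ.real {ω | t ≤ |∑ i ∈ s, (X i ω - μ[X i])|} ≤
      2 * exp (-2 * t ^ 2 / (s.card * (b - a) ^ 2)) := by
  set Y : ι → Ω → ℝ := fun i ω => X i ω - μ[X i]
  have hY : iIndepFun Y μ := by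
    exact h_indep.comp (fun i x => x - μ[X i]) fun _ => measurable_id.sub_const _
  have hsubG : ∀ i, HasSubgaussianMGF (Y i) ((‖b - a‖₊ / 2) ^ 2) μ := fun i =>
    hasSubgaussianMGF_of_mem_Icc (hX i) (hab i)
  have htail : ∀ Z : ι → Ω → ℝ, iIndepFun Z μ →
      (∀ i, HasSubgaussianMGF (Z i) ((‖b - a‖₊ / 2) ^ 2) μ) →
      μ.real {ω | t ≤ ∑ i ∈ s, Z i ω} ≤ exp (-2 * t ^ 2 / (s.card * (b - a) ^ 2)) := by
    intro Z hZ hZsubG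
    convert HasSubgaussianMGF.measure_sum_ge_le_of_iIndepFun hZ (fun i _ => hZsubG i) ht using 2
    simp only [Finset.sum_const, nsmul_eq_mul, NNReal.coe_mul, NNReal.coe_natCast, NNReal.coe_pow,
      NNReal.coe_div, coe_nnnorm, Real.norm_eq_abs, NNReal.coe_ofNat, div_pow, sq_abs]
    field_simp
  have hsplit : {ω | t ≤ |∑ i ∈ s, Y i ω|} ⊆
      {ω | t ≤ ∑ i ∈ s, Y i ω} ∪ {ω | t ≤ ∑ i ∈ s, (-Y i) ω} := by
    intro ω (hω : t ≤ _)
    rcases le_abs'.mp hω with h | h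
    · right
      show t ≤ ∑ i ∈ s, (-Y i) ω
      simp only [Pi.neg_apply, Finset.sum_neg_distrib]
      linarith
    · exact Or.inl h
  calc μ.real {ω | t ≤ |∑ i ∈ s, Y i ω|}
      ≤ μ.real {ω | t ≤ ∑ i ∈ s, Y i ω} + μ.real {ω | t ≤ ∑ i ∈ s, (-Y i) ω} :=
        (measureReal_mono hsplit).trans (measureReal_union_le _ _)
    _ ≤ _ := by
        rw [two_mul]
        gcongr
        · exact htail Y hY hsubG
        · exact htail (fun i => -Y i) (hY.comp (fun _ x => -x) fun _ => measurable_neg)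
            fun i => (hsubG i).neg

theorem integral_comp_eq_average_of_uniform {n : ℕ} {W : Ω → Fin n} (hW : Measurable W)
    (hunif : ∀ x, μ {ω | W ω = x} = 1 / n) (h : Fin n → ℝ) :
    ∫ ω, h (W ω) ∂μ = (n : ℝ)⁻¹ * ∑ x, h x := by
  have : IsProbabilityMeasure (μ.map W) := Measure.isProbabilityMeasure_map hW.aemeasurable
  have hsingleton : ∀ x, (μ.map W).real {x} = (n : ℝ)⁻¹ := fun x => by
    rw [measureReal_def, Measure.map_apply hW (measurableSet_singleton x)]
    exact (congrArg ENNReal.toReal (hunif x)).trans (by simp)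
  rw [← integral_map hW.aemeasurable (measurable_of_finite h).aestronglyMeasurable,
    integral_fintype .of_finite, Finset.mul_sum]
  simp only [hsingleton, smul_eq_mul]

theorem measureReal_abs_sampleMean_sub_mean_ge_le {n b : ℕ} {W : Fin b → Ω → Fin n}
    (hW : ∀ l, Measurable (W l)) (h_indep : iIndepFun W μ)
    (hunif : ∀ l x, μ {ω | W l ω = x} = 1 / n) {g : Fin n → ℝ} {lo hi : ℝ}
    (hg : ∀ x, g x ∈ Set.Icc lo hi) {t : ℝ} (ht : 0 ≤ t) :
    μ.real {ω | t ≤ |(b : ℝ)⁻¹ * ∑ l, g (W l ω) - (n : ℝ)⁻¹ * ∑ x, g x|} ≤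
      2 * exp (-2 * b * t ^ 2 / (hi - lo) ^ 2) := by
  rcases Nat.eq_zero_or_pos b with rfl | hb
  · simpa using measureReal_le_one.trans one_le_two
  have hbt := measureReal_abs_sum_sub_integral_ge_le (μ := μ) (X := fun l ω => g (W l ω))
    (h_indep.comp (fun _ => g) fun _ => measurable_of_finite g)
    (fun l => ((measurable_of_finite g).comp (hW l)).aemeasurable)
    (fun l => ae_of_all _ fun ω => hg (W l ω)) Finset.univ
    (mul_nonneg (Nat.cast_nonneg b) ht)
  simp only [integral_comp_eq_average_of_uniform (hW _) (hunif _), Finset.card_univ,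
    Fintype.card_fin] at hbt
  have hb' : (0 : ℝ) < b := Nat.cast_pos.mpr hb
  have hsum : ∀ ω, ∑ l, (g (W l ω) - (n : ℝ)⁻¹ * ∑ x, g x) =
      b * ((b : ℝ)⁻¹ * ∑ l, g (W l ω) - (n : ℝ)⁻¹ * ∑ x, g x) := fun ω => by
    rw [Finset.sum_sub_distrib, Finset.sum_const, Finset.card_univ, Fintype.card_fin,
      nsmul_eq_mul]
    field_simp
  simp only [hsum, abs_mul, Nat.abs_cast, mul_le_mul_iff_right₀ hb'] at hbt
  convert hbt using 3
  field_simp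

theorem measureReal_biUnion_abs_sampleMean_sub_mean_ge_le {n b : ℕ} {J : ℕ × Fin b → Ω → Fin n}
    (hJ : ∀ p, Measurable (J p)) (hJindep : iIndepFun J μ)
    (hJunif : ∀ p x, μ {ω | J p ω = x} = 1 / n) {ι : Type*} (s : Finset (ℕ × ι))
    {g : ι → Fin n → ℝ} {lo hi : ℝ} (hg : ∀ p ∈ s, ∀ x, g p.2 x ∈ Set.Icc lo hi) {t : ℝ}
    (ht : 0 ≤ t) :
    μ.real (⋃ p ∈ s,
        {ω | t ≤ |(b : ℝ)⁻¹ * ∑ l, g p.2 (J (p.1, l) ω) - (n : ℝ)⁻¹ * ∑ x, g p.2 x|}) ≤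
      s.card * (2 * exp (-2 * b * t ^ 2 / (hi - lo) ^ 2)) := by
  refine (measureReal_biUnion_finset_le _ _).trans ?_
  rw [← nsmul_eq_mul]
  exact Finset.sum_le_card_nsmul _ _ _ fun p hp =>
    measureReal_abs_sampleMean_sub_mean_ge_le (fun _ => hJ _)
      (hJindep.precomp (Prod.mk_right_injective p.1)) (fun _ => hJunif _) (hg p hp) ht

theorem ofReal_one_sub_le_measure_of_measureReal_compl_le {s : Set Ω} {p : ℝ}
    (h : μ.real sᶜ ≤ p) : ENNReal.ofReal (1 - p) ≤ μ s := by
  rw [← ofReal_measureReal]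
  apply ENNReal.ofReal_le_ofReal
  have := measureReal_union_le (μ := μ) s sᶜ
  rw [Set.union_compl_self, probReal_univ] at this
  linarith

end

theorem exists_progress_lt_of_forall_abs_sub_lt {α : Type*} (f : α → ℝ) (fhat : ℕ → α → ℝ)
    (C : ℕ → α) {ε D : ℝ} {N : ℕ} (hf : 0 ≤ f (C (N + 1))) (hD : f (C 1) ≤ D)
    (hN : D < N * (ε / 2))
    (hacc : ∀ i ∈ Finset.Icc 1 N, |fhat i (C i) - f (C i)| < ε / 4 ∧
      |fhat i (C (i + 1)) - f (C (i + 1))| < ε / 4) :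
    ∃ i ∈ Finset.Icc 1 N, fhat i (C i) - fhat i (C (i + 1)) < ε := by
  by_contra! hprog
  have hstep : ∀ i ∈ Finset.range N, ε / 2 ≤ f (C (i + 1)) - f (C (i + 1 + 1)) := by
    intro i hi
    have hi' : i + 1 ∈ Finset.Icc 1 N := Finset.mem_Icc.mpr ⟨by omega, Finset.mem_range.mp hi⟩
    obtain ⟨h1, h2⟩ := hacc _ hi'
    have := hprog _ hi'
    rw [abs_lt] at h1 h2
    linarith
  have htelescope : N * (ε / 2) ≤ f (C 1) - f (C (N + 1)) := by
    simpa [Finset.sum_range_sub' (fun i => f (C (i + 1)))] using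
      Finset.card_nsmul_le_sum _ _ _ hstep
  linarith

theorem norm_sub_sq_le_card_of_mem_Icc {ι : Type*} [Fintype ι] {x y : EuclideanSpace ℝ ι}
    (hx : ∀ j, x j ∈ Set.Icc (0 : ℝ) 1) (hy : ∀ j, y j ∈ Set.Icc (0 : ℝ) 1) :
    ‖x - y‖ ^ 2 ≤ Fintype.card ι := by
  rw [EuclideanSpace.norm_sq_eq, ← nsmul_one, ← Finset.card_univ]
  refine Finset.sum_le_card_nsmul _ _ _ fun j _ => ?_
  obtain ⟨hx0, hx1⟩ := hx j
  obtain ⟨hy0, hy1⟩ := hy j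
  rw [PiLp.sub_apply, Real.norm_eq_abs, sq_abs]
  nlinarith

theorem kmCost_nonneg {d k : ℕ} (C : Fin k → EuclideanSpace ℝ (Fin d))
    (x : EuclideanSpace ℝ (Fin d)) : 0 ≤ kmCost C x :=
  Real.iInf_nonneg fun _ => sq_nonneg _

theorem kmCost_le_norm_sub_sq {d k : ℕ} (C : Fin k → EuclideanSpace ℝ (Fin d))
    (x : EuclideanSpace ℝ (Fin d)) (j : Fin k) : kmCost C x ≤ ‖x - C j‖ ^ 2 :=
  ciInf_le (Set.finite_range _).bddBelow j

theorem kmCost_mem_Icc {d k : ℕ} (hk : 0 < k) {C : Fin k → EuclideanSpace ℝ (Fin d)}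
    {x : EuclideanSpace ℝ (Fin d)} (hC : ∀ i j, C i j ∈ Set.Icc (0 : ℝ) 1)
    (hx : ∀ j, x j ∈ Set.Icc (0 : ℝ) 1) : kmCost C x ∈ Set.Icc (0 : ℝ) d := by
  refine ⟨kmCost_nonneg C x, (kmCost_le_norm_sub_sq C x ⟨0, hk⟩).trans ?_⟩
  simpa using norm_sub_sq_le_card_of_mem_Icc hx (hC ⟨0, hk⟩)

theorem kmCostTuple_nonneg {d k m : ℕ} (C : Fin k → EuclideanSpace ℝ (Fin d))
    (A : Fin m → EuclideanSpace ℝ (Fin d)) : 0 ≤ kmCostTuple C A :=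
  mul_nonneg (by positivity) (Finset.sum_nonneg fun i _ => kmCost_nonneg C (A i))

theorem kmCostTuple_le {d k m : ℕ} {C : Fin k → EuclideanSpace ℝ (Fin d)}
    {A : Fin m → EuclideanSpace ℝ (Fin d)} {D : ℝ} (hD : 0 ≤ D)
    (hA : ∀ i, kmCost C (A i) ≤ D) : kmCostTuple C A ≤ D := by
  rcases Nat.eq_zero_or_pos m with rfl | hm
  · simpa [kmCostTuple] using hD
  rw [kmCostTuple, inv_mul_le_iff₀ (Nat.cast_pos.mpr hm)]
  simpa using Finset.sum_le_card_nsmul Finset.univ _ D fun i _ => hA i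

theorem kmCostTuple_le_of_mem_Icc {d k m : ℕ} (hk : 0 < k) {C : Fin k → EuclideanSpace ℝ (Fin d)}
    {A : Fin m → EuclideanSpace ℝ (Fin d)} (hC : ∀ i j, C i j ∈ Set.Icc (0 : ℝ) 1)
    (hA : ∀ i j, A i j ∈ Set.Icc (0 : ℝ) 1) : kmCostTuple C A ≤ d :=
  kmCostTuple_le (Nat.cast_nonneg d) fun i => (kmCost_mem_Icc hk hC (hA i)).2

theorem exists_kmCostTuple_sub_lt_of_forall_abs_sub_lt {n d k b N : ℕ} (hk : 0 < k) {ε : ℝ}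
    (hε : 0 < ε) {X : Fin n → EuclideanSpace ℝ (Fin d)} (hX : ∀ i j, X i j ∈ Set.Icc (0 : ℝ) 1)
    {F : Finset (Fin k → EuclideanSpace ℝ (Fin d))}
    (hF : ∀ C ∈ F, ∀ i j, C i j ∈ Set.Icc (0 : ℝ) 1) {Cs : ℕ → Fin k → EuclideanSpace ℝ (Fin d)}
    (hCs : ∀ i, 1 ≤ i → Cs i ∈ F) {B : ℕ → Fin b → EuclideanSpace ℝ (Fin d)}
    (hN : 2 * d / ε < N)
    (hacc : ∀ p ∈ Finset.Icc 1 N ×ˢ F, |kmCostTuple p.2 (B p.1) - kmCostTuple p.2 X| < ε / 4) :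
    ∃ i ∈ Finset.Icc 1 N, kmCostTuple (Cs i) (B i) - kmCostTuple (Cs (i + 1)) (B i) < ε := by
  have hNε : (d : ℝ) < N * (ε / 2) :=
    calc (d : ℝ) = 2 * d / ε * (ε / 2) := by field_simp
      _ < N * (ε / 2) := by gcongr
  refine exists_progress_lt_of_forall_abs_sub_lt (kmCostTuple · X) (fun i C => kmCostTuple C (B i))
    Cs (kmCostTuple_nonneg _ _) (kmCostTuple_le_of_mem_Icc hk (hF _ (hCs 1 le_rfl)) hX) hNε
    fun i hi => ⟨hacc (i, Cs i) ?_, hacc (i, Cs (i + 1)) ?_⟩ <;>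
  simp only [Finset.mem_product, Finset.mem_Icc] at hi ⊢ <;>
  exact ⟨hi, hCs _ (by omega)⟩

theorem measureReal_forall_le_kmCostTuple_sub_le {Ω : Type*} [MeasurableSpace Ω]
    {μ : Measure Ω} [IsProbabilityMeasure μ] {n d k b N : ℕ} (hk : 0 < k) {ε : ℝ} (hε : 0 < ε)
    {X : Fin n → EuclideanSpace ℝ (Fin d)} (hX : ∀ i j, X i j ∈ Set.Icc (0 : ℝ) 1)
    {F : Finset (Fin k → EuclideanSpace ℝ (Fin d))}
    (hF : ∀ C ∈ F, ∀ i j, C i j ∈ Set.Icc (0 : ℝ) 1) {J : ℕ × Fin b → Ω → Fin n}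
    (hJ : ∀ p, Measurable (J p)) (hJindep : iIndepFun J μ)
    (hJunif : ∀ p x, μ {ω | J p ω = x} = 1 / n) {Cs : ℕ → Ω → Fin k → EuclideanSpace ℝ (Fin d)}
    (hCs : ∀ ω i, 1 ≤ i → Cs i ω ∈ F) (hN : 2 * d / ε < N) :
    μ.real {ω | ∀ i ∈ Finset.Icc 1 N, ε ≤ kmCostTuple (Cs i ω) (fun l => X (J (i, l) ω)) -
        kmCostTuple (Cs (i + 1) ω) (fun l => X (J (i, l) ω))} ≤
      N * F.card * (2 * exp (-2 * b * (ε / 4) ^ 2 / d ^ 2)) := by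
  calc _ ≤ μ.real (⋃ p ∈ Finset.Icc 1 N ×ˢ F, {ω | ε / 4 ≤
        |(b : ℝ)⁻¹ * ∑ l, kmCost p.2 (X (J (p.1, l) ω)) - (n : ℝ)⁻¹ * ∑ x, kmCost p.2 (X x)|}) := by
        refine measureReal_mono (fun ω hω => ?_) (measure_ne_top _ _)
        by_contra hbad
        simp only [Set.mem_iUnion₂, not_exists] at hbad
        obtain ⟨i, hi, hprog⟩ := exists_kmCostTuple_sub_lt_of_forall_abs_sub_lt hk hε hX hF
          (hCs ω) (B := fun i l => X (J (i, l) ω)) hN fun p hp => not_le.mp (hbad p hp)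
        exact (hω i hi).not_gt hprog
    _ ≤ (Finset.Icc 1 N ×ˢ F).card * (2 * exp (-2 * b * (ε / 4) ^ 2 / (d - 0) ^ 2)) :=
        measureReal_biUnion_abs_sampleMean_sub_mean_ge_le hJ hJindep hJunif _
          (g := fun C x => kmCost C (X x))
          (fun p hp x => kmCost_mem_Icc hk (hF _ (Finset.mem_product.mp hp).2) (hX x))
          (by positivity)
    _ = _ := by simp [Finset.card_product]

theorem two_pow_le_exp (m : ℕ) : (2 : ℝ) ^ m ≤ exp m := by
  rw [← exp_one_pow]
  gcongr
  linarith [add_one_le_exp 1]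

theorem natCast_mul_mul_two_mul_exp_le {n d N M b q k : ℕ} (hn : 0 < n) (hd : 0 < d) {ε : ℝ}
    (hε : 0 < ε) (hεd : ε ≤ d) (hN : (N : ℝ) ≤ 2 * d / ε + 1) (hM : M ≤ 2 ^ (q * k * d))
    (hb : (b : ℝ) ≥ 8 * (d / ε) ^ 2 * (q * k * d + log (n * d / ε))) :
    N * M * (2 * exp (-2 * b * (ε / 4) ^ 2 / d ^ 2)) ≤ 6 / n := by
  have hn' : (0 : ℝ) < n := Nat.cast_pos.mpr hn
  have hd' : (0 : ℝ) < d := Nat.cast_pos.mpr hd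
  set K : ℝ := q * k * d
  have hexp : exp (-2 * b * (ε / 4) ^ 2 / d ^ 2) ≤ exp (-K) * (ε / (n * d)) := by
    rw [← inv_div (n * d : ℝ), ← exp_log (by positivity : (0 : ℝ) < n * d / ε), ← exp_neg,
      ← exp_add]
    gcongr
    rw [div_le_iff₀ (by positivity)]
    have h := mul_le_mul_of_nonneg_right hb (sq_nonneg (ε / 4))
    have : 8 * (d / ε) ^ 2 * (K + log (n * d / ε)) * (ε / 4) ^ 2 =
        d ^ 2 / 2 * (K + log (n * d / ε)) := by field_simp; ring
    linarith
  have hMK : M * exp (-K) ≤ 1 := by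
    have : (M : ℝ) ≤ exp K := by
      calc (M : ℝ) ≤ 2 ^ (q * k * d) := by exact_mod_cast hM
        _ ≤ exp K := by simpa [K] using two_pow_le_exp (q * k * d)
    rw [exp_neg, ← div_eq_mul_inv, div_le_one (exp_pos K)]
    exact this
  have hN3 : (N : ℝ) ≤ 3 * (d / ε) := by
    have : 1 ≤ d / ε := (one_le_div hε).mpr hεd
    rw [mul_div_assoc] at hN
    linarith
  calc N * M * (2 * exp (-2 * b * (ε / 4) ^ 2 / d ^ 2))
      ≤ 3 * (d / ε) * M * (2 * (exp (-K) * (ε / (n * d)))) := by gcongr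
    _ = 6 / n * (M * exp (-K)) := by field_simp; ring
    _ ≤ 6 / n := mul_le_of_le_one_right (by positivity) hMK

/-- generic mini-batch k-means over a finite family `F` of at most
`2^(qkd)` configurations of centers, with an arbitrary update rule `U : F × batch → F`,
i.i.d. uniform batches `B_i` of size `b`, and stopping as soon as the batch progress
drops below `ε`.  There are absolute constants `c₁, c₂ > 0` such that if
`b ≥ c₁·(d/ε)²·(qkd + log(nd/ε))` then with probability at least `1 − c₂/n` the
process stops within the first `2d/ε + 1` iterations. -/
theorem generic_minibatch_kmeans_terminates :
    ∃ c₁ c₂ : ℝ, 0 < c₁ ∧ 0 < c₂ ∧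
      ∀ (n d k b q : ℕ), 0 < n → 0 < d → 0 < k → 0 < b →
      ∀ (ε : ℝ), 0 < ε →
      ∀ (X : Fin n → EuclideanSpace ℝ (Fin d)),
        (∀ i j, X i j ∈ Set.Icc (0 : ℝ) 1) →
      ∀ (F : Finset (Fin k → EuclideanSpace ℝ (Fin d))),
        (∀ C ∈ F, ∀ i j, C i j ∈ Set.Icc (0 : ℝ) 1) →
        F.card ≤ 2 ^ (q * k * d) →
      ∀ (U : (Fin k → EuclideanSpace ℝ (Fin d)) → (Fin b → EuclideanSpace ℝ (Fin d)) →
              (Fin k → EuclideanSpace ℝ (Fin d))),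
        (∀ C ∈ F, ∀ B, U C B ∈ F) →
      ∀ (C₁ : Fin k → EuclideanSpace ℝ (Fin d)), C₁ ∈ F →
      ∀ (Ω : Type) (_ : MeasurableSpace Ω) (μ : Measure Ω) (_ : IsProbabilityMeasure μ)
        (J : ℕ × Fin b → Ω → Fin n),
        (∀ p, Measurable (J p)) →
        ProbabilityTheory.iIndepFun J μ →
        (∀ p x, μ {ω | J p ω = x} = 1 / n) →
      ∀ (Cseq : ℕ → Ω → (Fin k → EuclideanSpace ℝ (Fin d))),
        (∀ ω, Cseq 1 ω = C₁) →
        (∀ i ω, 1 ≤ i → Cseq (i + 1) ω = U (Cseq i ω) (fun l => X (J (i, l) ω))) →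
        (b : ℝ) ≥ c₁ * (d / ε) ^ 2 * (q * k * d + Real.log (n * d / ε)) →
        μ {ω | ∃ i : ℕ, 1 ≤ i ∧ (i : ℝ) ≤ 2 * d / ε + 1 ∧
            kmCostTuple (Cseq i ω) (fun l => X (J (i, l) ω)) -
              kmCostTuple (Cseq (i + 1) ω) (fun l => X (J (i, l) ω)) < ε}
          ≥ ENNReal.ofReal (1 - c₂ / n) := by
  refine ⟨8, 6, by norm_num, by norm_num, ?_⟩
  intro n d k b q hn hd hk _ ε hε X hX F hF hFcard U hU C₁ hC₁ Ω _ μ _ J hJ hJindep hJunif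
    Cseq hC1 hCstep hbge
  have hmem : ∀ ω i, 1 ≤ i → Cseq i ω ∈ F := fun ω i hi => by
    induction i, hi using Nat.le_induction with
    | base => exact hC1 ω ▸ hC₁
    | succ i hi ih => exact hCstep i ω hi ▸ hU _ ih _
  refine ofReal_one_sub_le_measure_of_measureReal_compl_le ?_
  rcases le_or_gt ε d with hεd | hdε
  · set N := ⌊2 * (d : ℝ) / ε⌋₊ + 1
    have hN : 2 * (d : ℝ) / ε < N ∧ (N : ℝ) ≤ 2 * d / ε + 1 :=
      ⟨by simpa [N] using Nat.lt_floor_add_one _, by simpa [N] using Nat.floor_le (by positivity)⟩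
    calc _ ≤ μ.real {ω | ∀ i ∈ Finset.Icc 1 N, ε ≤
          kmCostTuple (Cseq i ω) (fun l => X (J (i, l) ω)) -
            kmCostTuple (Cseq (i + 1) ω) (fun l => X (J (i, l) ω))} :=
          measureReal_mono ?_ (measure_ne_top _ _)
      _ ≤ N * F.card * (2 * exp (-2 * b * (ε / 4) ^ 2 / d ^ 2)) :=
          measureReal_forall_le_kmCostTuple_sub_le hk hε hX hF hJ hJindep hJunif hmem hN.1
      _ ≤ 6 / n := natCast_mul_mul_two_mul_exp_le hn hd hε hεd hN.2 hFcard hbge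
    refine fun ω hω i hi => not_lt.mp fun hprog => hω ⟨i, (Finset.mem_Icc.mp hi).1, ?_, hprog⟩
    exact le_trans (by exact_mod_cast (Finset.mem_Icc.mp hi).2) hN.2
  · -- For `ε > d` the batch progress, bounded by a batch cost `≤ d`, is below `ε` at step 1.
    calc _ ≤ μ.real (∅ : Set Ω) := measureReal_mono ?_ (measure_ne_top _ _)
      _ ≤ 6 / n := by rw [measureReal_empty]; positivity
    refine fun ω hω => hω ⟨1, le_rfl, by norm_num; positivity, ?_⟩
    linarith [kmCostTuple_le_of_mem_Icc hk (hF _ (hmem ω 1 le_rfl)) fun l => hX (J (1, l) ω),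
      kmCostTuple_nonneg (Cseq (1 + 1) ω) fun l => X (J (1, l) ω)]
end

section
/- Let B′ be a finite nonempty tuple of b′ points in ℝ^d, let C ∈ ℝ^d, let α ∈ [0,1], and set C′ = (1−α)·C + α·cm(B′). Then Δ(B′, C) − Δ(B′, C′) = (2α − α²)·b′·Δ(C, cm(B′)), and in particular Δ(B′, C) − Δ(B′, C′) ≥ α·b′·Δ(C, cm(B′)). -/
/-! Steiner's (parallel axis) formula `∑ ‖x i - c‖² = ∑ ‖x i - m‖² + n ‖c - m‖²`, with `m` the
center of mass of the `n` points, reduces the progress to `n (‖C - m‖² - ‖C' - m‖²)`. The update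
shrinks `C - m` to `C' - m = (1 - α) (C - m)`, so the progress is `(1 - (1 - α)²) n ‖C - m‖²`,
and `α ≤ 2α - α²` exactly when `α ∈ [0, 1]`. -/

open Finset RealInnerProductSpace

theorem Finset.sum_sub_inv_card_smul_sum {ι 𝕜 V : Type*} [Field 𝕜] [CharZero 𝕜]
    [AddCommGroup V] [Module 𝕜 V] (s : Finset ι) (x : ι → V) :
    ∑ i ∈ s, (x i - (#s : 𝕜)⁻¹ • ∑ j ∈ s, x j) = 0 := by
  rcases s.eq_empty_or_nonempty with rfl | hs
  · simp
  · rw [sum_sub_distrib, sum_const, ← Nat.cast_smul_eq_nsmul 𝕜,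
      smul_inv_smul₀ (Nat.cast_ne_zero.mpr hs.card_pos.ne'), sub_self]

theorem Finset.sum_norm_sub_sq_eq_sum_norm_sub_centroid_sq_add {ι E : Type*}
    [NormedAddCommGroup E] [InnerProductSpace ℝ E] (s : Finset ι) (x : ι → E) (c : E) :
    ∑ i ∈ s, ‖x i - c‖ ^ 2 = ∑ i ∈ s, ‖x i - (#s : ℝ)⁻¹ • ∑ j ∈ s, x j‖ ^ 2
      + #s * ‖c - (#s : ℝ)⁻¹ • ∑ j ∈ s, x j‖ ^ 2 := by
  set m := (#s : ℝ)⁻¹ • ∑ j ∈ s, x j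
  have hexpand : ∀ i, ‖x i - c‖ ^ 2 = ‖x i - m‖ ^ 2 + 2 * ⟪x i - m, m - c⟫ + ‖c - m‖ ^ 2 := by
    intro i
    rw [← sub_add_sub_cancel (x i) m c, norm_add_sq_real, norm_sub_rev m c]
  have hcross : ∑ i ∈ s, ⟪x i - m, m - c⟫ = 0 := by
    rw [← sum_inner, sum_sub_inv_card_smul_sum, inner_zero_left]
  simp only [hexpand, sum_add_distrib, ← mul_sum, hcross, sum_const, nsmul_eq_mul]
  ring

theorem progress_of_center_update_general {d b' : ℕ}
    (B : Fin b' → EuclideanSpace ℝ (Fin d))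
    (C : EuclideanSpace ℝ (Fin d)) (α : ℝ) (hα : α ∈ Set.Icc (0 : ℝ) 1) :
    ((∑ l : Fin b', ‖B l - C‖ ^ 2) -
        ∑ l : Fin b', ‖B l - ((1 - α) • C + α • ((b' : ℝ)⁻¹ • ∑ i : Fin b', B i))‖ ^ 2)
      = (2 * α - α ^ 2) * b' * ‖C - ((b' : ℝ)⁻¹ • ∑ i : Fin b', B i)‖ ^ 2
    ∧ ((∑ l : Fin b', ‖B l - C‖ ^ 2) -
        ∑ l : Fin b', ‖B l - ((1 - α) • C + α • ((b' : ℝ)⁻¹ • ∑ i : Fin b', B i))‖ ^ 2)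
      ≥ α * b' * ‖C - ((b' : ℝ)⁻¹ • ∑ i : Fin b', B i)‖ ^ 2 := by
  set m := (b' : ℝ)⁻¹ • ∑ i, B i
  have hsteiner (c : EuclideanSpace ℝ (Fin d)) :
      ∑ l, ‖B l - c‖ ^ 2 = ∑ l, ‖B l - m‖ ^ 2 + b' * ‖c - m‖ ^ 2 := by
    simpa using univ.sum_norm_sub_sq_eq_sum_norm_sub_centroid_sq_add B c
  have hshrink : ‖(1 - α) • C + α • m - m‖ = |1 - α| * ‖C - m‖ := by
    rw [show (1 - α) • C + α • m - m = (1 - α) • (C - m) by module, norm_smul, Real.norm_eq_abs]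
  have hprogress : ∑ l, ‖B l - C‖ ^ 2 - ∑ l, ‖B l - ((1 - α) • C + α • m)‖ ^ 2
      = (2 * α - α ^ 2) * b' * ‖C - m‖ ^ 2 := by
    rw [hsteiner C, hsteiner ((1 - α) • C + α • m), hshrink, mul_pow, sq_abs]
    ring
  refine ⟨hprogress, hprogress ▸ ?_⟩
  have hα_le : α ≤ 2 * α - α ^ 2 := by nlinarith [hα.1, hα.2]
  gcongr

/-- moving a center `C` towards the center of mass of a nonempty tuple
`B'` by a factor `α ∈ [0,1]` decreases `Δ(B', ·)` by exactly
`(2α − α²)·|B'|·Δ(C, cm(B'))`, hence by at least `α·|B'|·Δ(C, cm(B'))`. -/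
theorem progress_of_center_update {d b' : ℕ} (hb' : 0 < b')
    (B : Fin b' → EuclideanSpace ℝ (Fin d))
    (C : EuclideanSpace ℝ (Fin d)) (α : ℝ) (hα : α ∈ Set.Icc (0 : ℝ) 1) :
    ((∑ l : Fin b', ‖B l - C‖ ^ 2) -
        ∑ l : Fin b', ‖B l - ((1 - α) • C + α • ((b' : ℝ)⁻¹ • ∑ i : Fin b', B i))‖ ^ 2)
      = (2 * α - α ^ 2) * b' * ‖C - ((b' : ℝ)⁻¹ • ∑ i : Fin b', B i)‖ ^ 2
    ∧ ((∑ l : Fin b', ‖B l - C‖ ^ 2) -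
        ∑ l : Fin b', ‖B l - ((1 - α) • C + α • ((b' : ℝ)⁻¹ • ∑ i : Fin b', B i))‖ ^ 2)
      ≥ α * b' * ‖C - ((b' : ℝ)⁻¹ • ∑ i : Fin b', B i)‖ ^ 2 :=
  progress_of_center_update_general B C α hα
end

section
/- Let B be a tuple of b points in [0,1]^d, let 𝒞_i = (𝒞_i^1,...,𝒞_i^k) be a tuple of k centers in [0,1]^d, let (B^j)_{j∈[k]} be the partition of B induced by 𝒞_i with b^j = |B^j|, set α^j = √(b^j/b), and define 𝒞_{i+1}^j = (1 − α^j)·𝒞_i^j + α^j·cm(B^j) (with 𝒞_{i+1}^j = 𝒞_i^j when b^j = 0). If Σ_{j∈[k]} ‖𝒞_{i+1}^j − 𝒞_i^j‖² > ε, then f_B(𝒞_i) − f_B(𝒞_{i+1}) > ε^{3/2}/√(kd). -/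
open scoped BigOperators

/-- Mini-batch center update with learning rate `α = √(|s|/b)`: the new center is
`(1 − α)·Cⱼ + α·cm(B restricted to s)`, and `Cⱼ` itself when `s` is empty. -/
noncomputable def miniBatchUpdate {d b : ℕ} (B : Fin b → EuclideanSpace ℝ (Fin d))
    (s : Finset (Fin b)) (Cj : EuclideanSpace ℝ (Fin d)) : EuclideanSpace ℝ (Fin d) :=
  if s.Nonempty then
    (1 - Real.sqrt (s.card / b)) • Cj
      + Real.sqrt (s.card / b) • ((s.card : ℝ)⁻¹ • ∑ l ∈ s, B l)
  else Cj

/-! On a cluster `B^j` the cost, as a function of its center, is `#B^j ‖· − cm(B^j)‖²` plus a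
constant. Moving `𝒞^j` the fraction `α^j` of the way to `cm(B^j)` thus lowers it by
`#B^j α^j (2 − α^j) ‖cm(B^j) − 𝒞^j‖² ≥ b α^j m_j`, where `m_j = ‖𝒞_{i+1}^j − 𝒞_i^j‖² =
(α^j)² ‖cm(B^j) − 𝒞^j‖²` and `(α^j)² = #B^j / b`; so `f_B` drops by at least `Σ_j α^j m_j`.
In the unit cube `m_j ≤ (α^j)² d`, i.e. `α^j m_j ≥ m_j^{3/2} / √d`, and the power-mean inequality
`(Σ_j m_j)^{3/2} ≤ √k Σ_j m_j^{3/2}` concludes. -/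

open Finset

section Centroid

variable {ι E : Type*} [NormedAddCommGroup E] [InnerProductSpace ℝ E]

lemma card_smul_inv_card_smul_sum (s : Finset ι) (y : ι → E) :
    (#s : ℝ) • ((#s : ℝ)⁻¹ • ∑ l ∈ s, y l) = ∑ l ∈ s, y l := by
  rcases s.eq_empty_or_nonempty with rfl | hs
  · simp
  · exact smul_inv_smul₀ (by positivity) _

/-- `w ↦ ‖w - x‖² - ‖w - z‖²` is affine, so its sum over `s` is `#s` times its value at the
centroid `c = (#s)⁻¹ • ∑ y` (also when `s = ∅`, where `c = 0`). -/
lemma sum_norm_sub_sq_sub_norm_sub_sq (s : Finset ι) (y : ι → E) (x z : E) :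
    ∑ l ∈ s, (‖y l - x‖ ^ 2 - ‖y l - z‖ ^ 2)
      = #s * (‖(#s : ℝ)⁻¹ • ∑ l ∈ s, y l - x‖ ^ 2 - ‖(#s : ℝ)⁻¹ • ∑ l ∈ s, y l - z‖ ^ 2) := by
  have affine : ∀ w : E,
      ‖w - x‖ ^ 2 - ‖w - z‖ ^ 2 = 2 * inner ℝ w (z - x) + (‖x‖ ^ 2 - ‖z‖ ^ 2) := by
    intro w
    rw [norm_sub_sq_real, norm_sub_sq_real, inner_sub_right]
    ring
  have hsum : inner ℝ (∑ l ∈ s, y l) (z - x)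
      = #s * inner ℝ ((#s : ℝ)⁻¹ • ∑ l ∈ s, y l) (z - x) := by
    rw [← real_inner_smul_left, card_smul_inv_card_smul_sum]
  simp only [affine]
  rw [sum_add_distrib, ← mul_sum, ← sum_inner, sum_const, nsmul_eq_mul, hsum]
  ring

end Centroid

lemma inv_card_smul_sum_apply_mem_Icc {ι κ : Type*} [Fintype κ] (s : Finset ι)
    (y : ι → EuclideanSpace ℝ κ) (hy : ∀ l i, y l i ∈ Set.Icc (0 : ℝ) 1) (i : κ) :
    ((#s : ℝ)⁻¹ • ∑ l ∈ s, y l) i ∈ Set.Icc (0 : ℝ) 1 := by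
  have hsum_le : ∑ l ∈ s, y l i ≤ #s := by
    simpa using sum_le_sum fun l _ => (hy l i).2
  simp only [PiLp.smul_apply, WithLp.ofLp_sum, Finset.sum_apply, smul_eq_mul]
  exact ⟨mul_nonneg (by positivity) (sum_nonneg fun l _ => (hy l i).1),
    inv_mul_le_one_of_le₀ hsum_le (Nat.cast_nonneg _)⟩

lemma norm_sub_sq_le_card_of_mem_Icc_s17 {κ : Type*} [Fintype κ] {u w : EuclideanSpace ℝ κ}
    (hu : ∀ i, u i ∈ Set.Icc (0 : ℝ) 1) (hw : ∀ i, w i ∈ Set.Icc (0 : ℝ) 1) :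
    ‖u - w‖ ^ 2 ≤ Fintype.card κ := by
  rw [EuclideanSpace.norm_sq_eq, Fintype.card_eq_sum_ones, Nat.cast_sum, Nat.cast_one]
  refine sum_le_sum fun i _ => ?_
  obtain ⟨hu0, hu1⟩ := hu i
  obtain ⟨hw0, hw1⟩ := hw i
  rw [Real.norm_eq_abs, sq_abs, PiLp.sub_apply]
  nlinarith

section MiniBatch

variable {d b : ℕ} (B : Fin b → EuclideanSpace ℝ (Fin d)) (s : Finset (Fin b))
  (x : EuclideanSpace ℝ (Fin d))

lemma miniBatchUpdate_eq_add_smul :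
    miniBatchUpdate B s x
      = x + √(#s / b) • ((#s : ℝ)⁻¹ • ∑ l ∈ s, B l - x) := by
  by_cases hs : s.Nonempty
  · rw [miniBatchUpdate, if_pos hs]
    module
  · simp [miniBatchUpdate, Finset.not_nonempty_iff_eq_empty.1 hs]

lemma sqrt_card_div_le_one : √(#s / b) ≤ 1 :=
  Real.sqrt_le_one.2 <| div_le_one_of_le₀
    (by exact_mod_cast (card_le_univ s).trans_eq (Fintype.card_fin b)) (Nat.cast_nonneg _)

lemma sqrt_mul_norm_miniBatchUpdate_sub_sq_le :
    √(#s / b) * ‖miniBatchUpdate B s x - x‖ ^ 2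
      ≤ (b : ℝ)⁻¹ * ∑ l ∈ s, (‖B l - x‖ ^ 2 - ‖B l - miniBatchUpdate B s x‖ ^ 2) := by
  rw [sum_norm_sub_sq_sub_norm_sub_sq, miniBatchUpdate_eq_add_smul]
  set a := √(#s / b) with ha
  set c := (#s : ℝ)⁻¹ • ∑ l ∈ s, B l
  have ha0 : 0 ≤ a := Real.sqrt_nonneg _
  have ha1 : a ≤ 1 := sqrt_card_div_le_one s
  have ha2 : (b : ℝ)⁻¹ * #s = a ^ 2 := by
    rw [ha, Real.sq_sqrt (by positivity), inv_mul_eq_div]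
  rw [show x + a • (c - x) - x = a • (c - x) by abel,
    show c - (x + a • (c - x)) = (1 - a) • (c - x) by module,
    norm_smul, norm_smul, mul_pow, mul_pow, Real.norm_eq_abs, Real.norm_eq_abs, sq_abs, sq_abs,
    ← mul_assoc (b : ℝ)⁻¹, ha2]
  have hN : 0 ≤ ‖c - x‖ ^ 2 := sq_nonneg _
  nlinarith [mul_nonneg (mul_nonneg (pow_nonneg ha0 3) hN) (sub_nonneg.2 ha1)]

lemma norm_miniBatchUpdate_sub_sq_le (hB : ∀ l i, B l i ∈ Set.Icc (0 : ℝ) 1)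
    (hx : ∀ i, x i ∈ Set.Icc (0 : ℝ) 1) :
    ‖miniBatchUpdate B s x - x‖ ^ 2 ≤ √(#s / b) ^ 2 * d := by
  rw [miniBatchUpdate_eq_add_smul, add_sub_cancel_left, norm_smul, mul_pow, Real.norm_eq_abs,
    sq_abs]
  gcongr
  simpa using norm_sub_sq_le_card_of_mem_Icc_s17 (inv_card_smul_sum_apply_mem_Icc s B hB) hx

end MiniBatch

section Cost

variable {d k : ℕ} (C : Fin k → EuclideanSpace ℝ (Fin d))

lemma kmCost_le (x : EuclideanSpace ℝ (Fin d)) (j : Fin k) : kmCost C x ≤ ‖x - C j‖ ^ 2 :=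
  ciInf_le (Set.finite_range _).bddBelow j

lemma kmCost_eq_of_forall_norm_le {x : EuclideanSpace ℝ (Fin d)} {i : Fin k}
    (hi : ∀ j, ‖x - C i‖ ≤ ‖x - C j‖) : kmCost C x = ‖x - C i‖ ^ 2 :=
  have : Nonempty (Fin k) := ⟨i⟩
  le_antisymm (kmCost_le C x i) (le_ciInf fun j => by gcongr; exact hi j)

lemma inv_mul_sum_le_kmCostTuple_sub {m : ℕ} (A : Fin m → EuclideanSpace ℝ (Fin d))
    (C' : Fin k → EuclideanSpace ℝ (Fin d)) {p : Fin m → Fin k}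
    (hp : ∀ l j, ‖A l - C (p l)‖ ≤ ‖A l - C j‖) :
    (m : ℝ)⁻¹ * ∑ l, (‖A l - C (p l)‖ ^ 2 - ‖A l - C' (p l)‖ ^ 2)
      ≤ kmCostTuple C A - kmCostTuple C' A := by
  rw [kmCostTuple, kmCostTuple, ← mul_sub, ← sum_sub_distrib]
  gcongr with l
  · exact (kmCost_eq_of_forall_norm_le C (hp l)).ge
  · exact kmCost_le C' _ _

end Cost

/-- The paper's `𝒞_{i+1}`, for `𝒞_i = C` and the partition of `B` given by `p`. -/
noncomputable def miniBatchStep {d k b : ℕ} (B : Fin b → EuclideanSpace ℝ (Fin d))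
    (C : Fin k → EuclideanSpace ℝ (Fin d)) (p : Fin b → Fin k) :
    Fin k → EuclideanSpace ℝ (Fin d) :=
  fun j => miniBatchUpdate B {l | p l = j} (C j)

lemma sum_sqrt_mul_norm_miniBatchStep_sub_sq_le {d k b : ℕ}
    (B : Fin b → EuclideanSpace ℝ (Fin d)) (C : Fin k → EuclideanSpace ℝ (Fin d))
    {p : Fin b → Fin k} (hp : ∀ l j, ‖B l - C (p l)‖ ≤ ‖B l - C j‖) :
    ∑ j, √(#{l | p l = j} / b) * ‖miniBatchStep B C p j - C j‖ ^ 2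
      ≤ kmCostTuple C B - kmCostTuple (miniBatchStep B C p) B := by
  refine le_trans ?_ (inv_mul_sum_le_kmCostTuple_sub C B _ hp)
  rw [← sum_fiberwise (M := ℝ) univ p, mul_sum]
  refine sum_le_sum fun j _ => (sqrt_mul_norm_miniBatchUpdate_sub_sq_le B _ (C j)).trans_eq ?_
  congr 1
  refine sum_congr rfl fun l hl => ?_
  rw [(mem_filter.1 hl).2]
  rfl

lemma rpow_three_halves_le_of_le_sq_mul {m a D : ℝ} (hm : 0 ≤ m) (ha : 0 ≤ a)
    (hmaD : m ≤ a ^ 2 * D) : m ^ ((3 : ℝ) / 2) ≤ √D * (a * m) := by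
  have hsqrt : √m ≤ a * √D := by
    simpa only [Real.sqrt_mul (sq_nonneg a), Real.sqrt_sq ha] using Real.sqrt_le_sqrt hmaD
  rw [show (3 : ℝ) / 2 = 1 + 1 / 2 by norm_num, Real.rpow_add' hm (by norm_num), Real.rpow_one,
    ← Real.sqrt_eq_rpow]
  nlinarith

lemma sum_rpow_three_halves_le {ι : Type*} (s : Finset ι) (f : ι → ℝ) (hf : ∀ i ∈ s, 0 ≤ f i) :
    (∑ i ∈ s, f i) ^ ((3 : ℝ) / 2) ≤ √(#s : ℝ) * ∑ i ∈ s, f i ^ ((3 : ℝ) / 2) := by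
  simpa [Real.sqrt_eq_rpow, show (3 : ℝ) / 2 - 1 = 1 / 2 by norm_num] using
    Real.rpow_sum_le_const_mul_sum_rpow_of_nonneg s (by norm_num : (1 : ℝ) ≤ 3 / 2) hf

lemma div_lt_of_lt_mul_of_nonneg {x c y : ℝ} (hx : 0 ≤ x) (hc : 0 ≤ c) (h : x < c * y) :
    x / c < y := by
  have hc' : 0 < c := hc.lt_of_ne fun hc0 => by rw [← hc0, zero_mul] at h; exact hx.not_gt h
  rwa [div_lt_iff₀ hc', mul_comm]

theorem center_movement_implies_batch_progress_general {d k b : ℕ}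
    (B : Fin b → EuclideanSpace ℝ (Fin d))
    (hB : ∀ l j, B l j ∈ Set.Icc (0 : ℝ) 1)
    (C : Fin k → EuclideanSpace ℝ (Fin d))
    (hC : ∀ i j, C i j ∈ Set.Icc (0 : ℝ) 1)
    (p : Fin b → Fin k)
    (hp : ∀ l j, ‖B l - C (p l)‖ ≤ ‖B l - C j‖)
    (ε : ℝ) (hε : 0 < ε)
    (hmove : ∑ j : Fin k,
        ‖miniBatchUpdate B (Finset.univ.filter (fun l => p l = j)) (C j) - C j‖ ^ 2 > ε) :
    kmCostTuple C B -
        kmCostTuple (fun j => miniBatchUpdate B (Finset.univ.filter (fun l => p l = j)) (C j)) B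
      > ε ^ ((3 : ℝ) / 2) / Real.sqrt (k * d) := by
  change ε < ∑ j, ‖miniBatchStep B C p j - C j‖ ^ 2 at hmove
  change _ < kmCostTuple C B - kmCostTuple (miniBatchStep B C p) B
  set m := fun j => ‖miniBatchStep B C p j - C j‖ ^ 2
  set a := fun j : Fin k => √(#{l : Fin b | p l = j} / b)
  have hm : ∀ j, m j ^ ((3 : ℝ) / 2) ≤ √d * (a j * m j) := fun j =>
    rpow_three_halves_le_of_le_sq_mul (sq_nonneg _) (Real.sqrt_nonneg _)
      (norm_miniBatchUpdate_sub_sq_le B _ (C j) hB (hC j))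
  refine div_lt_of_lt_mul_of_nonneg (Real.rpow_nonneg hε.le _) (Real.sqrt_nonneg _) ?_
  calc ε ^ ((3 : ℝ) / 2) < (∑ j, m j) ^ ((3 : ℝ) / 2) := by gcongr
    _ ≤ √k * ∑ j, m j ^ ((3 : ℝ) / 2) := by
      simpa using sum_rpow_three_halves_le univ m fun j _ => sq_nonneg _
    _ ≤ √k * (√d * ∑ j, a j * m j) := by
      gcongr
      rw [mul_sum]
      exact sum_le_sum fun j _ => hm j
    _ ≤ √(k * d) * (kmCostTuple C B - kmCostTuple (miniBatchStep B C p) B) := by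
      rw [Real.sqrt_mul (Nat.cast_nonneg _), mul_assoc]
      gcongr
      exact sum_sqrt_mul_norm_miniBatchStep_sub_sq_le B C hp

/-- one step of mini-batch k-means with learning rate `α^j = √(b^j/b)`:
if the centers move a lot, `Σ_j ‖𝒞_{i+1}^j − 𝒞_i^j‖² > ε`, then the batch cost drops a
lot, `f_B(𝒞_i) − f_B(𝒞_{i+1}) > ε^{3/2}/√(kd)`.  Here `p` assigns each batch point to a
nearest center of `𝒞_i` (the induced partition, ties broken arbitrarily). -/
theorem center_movement_implies_batch_progress {d k b : ℕ}
    (hd : 0 < d) (hk : 0 < k) (hb : 0 < b)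
    (B : Fin b → EuclideanSpace ℝ (Fin d))
    (hB : ∀ l j, B l j ∈ Set.Icc (0 : ℝ) 1)
    (C : Fin k → EuclideanSpace ℝ (Fin d))
    (hC : ∀ i j, C i j ∈ Set.Icc (0 : ℝ) 1)
    (p : Fin b → Fin k)
    (hp : ∀ l j, ‖B l - C (p l)‖ ≤ ‖B l - C j‖)
    (ε : ℝ) (hε : 0 < ε)
    (hmove : ∑ j : Fin k,
        ‖miniBatchUpdate B (Finset.univ.filter (fun l => p l = j)) (C j) - C j‖ ^ 2 > ε) :
    kmCostTuple C B -
        kmCostTuple (fun j => miniBatchUpdate B (Finset.univ.filter (fun l => p l = j)) (C j)) B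
      > ε ^ ((3 : ℝ) / 2) / Real.sqrt (k * d) :=
  center_movement_implies_batch_progress_general B hB C hC p hp ε hε hmove
end
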